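/- arXiv:1602.04240 — 3 statements merged into one kernel-verified Lean document; each statement's English description precedes it below -/
import Mathlib

section
/- Let T1 and T2 be two Euclidean triangles glued along a common edge to form a hinge H (a planar quadrilateral region). Then any line segment E contained in H joining the two non-adjacent edges (one edge of T1 and one edge of T2, neither being the common edge) has length at least the minimum of the altitudes of T1 and T2. -/
/-!
The segment `[p, q]` runs from the first triangle to the second and stays in their union, so by
connectedness it meets their intersection, the common edge, at some `r = (1 - u) a + u b`.
The homothety with centre `a` and ratio `u` fixes the line `ac` and sends `b` to `r`, so
`dist p r ≥ dist r (ac) ≥ u h_b`, where `h_b` is the altitude of `abc` from `b`; symmetrically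
`dist r q ≥ (1 - u) h_a` with `h_a` the altitude of `abd` from `a`. Adding the two bounds gives
`dist p q ≥ min h_a h_b`.
-/

open Metric Set

noncomputable section

/-- The distance from the vertex `x` of a triangle `x y z` to the line through the opposite
side, i.e. the altitude of the triangle through `x`. -/
noncomputable def altitudeFrom (x y z : EuclideanSpace ℝ (Fin 2)) : ℝ :=
  Metric.infDist x (affineSpan ℝ ({y, z} : Set (EuclideanSpace ℝ (Fin 2))) : Set (EuclideanSpace ℝ (Fin 2)))

/-- The minimum of the three altitudes of the triangle `x y z`. -/
noncomputable def minAltitude (x y z : EuclideanSpace ℝ (Fin 2)) : ℝ :=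
  min (altitudeFrom x y z) (min (altitudeFrom y x z) (altitudeFrom z x y))

open AffineMap

section Homothety

variable {V P : Type*} [NormedAddCommGroup V] [NormedSpace ℝ V] [MetricSpace P]
  [NormedAddTorsor V P]

theorem dist_homothety_homothety (c p q : P) (r : ℝ) :
    dist (homothety c r p) (homothety c r q) = |r| * dist p q := by
  rw [dist_eq_norm_vsub V, ← linearMap_vsub, homothety_linear, LinearMap.smul_apply,
    LinearMap.id_apply, norm_smul, Real.norm_eq_abs, ← dist_eq_norm_vsub V]

theorem mul_infDist_le_infDist_homothety {S : AffineSubspace ℝ P} {c : P} (hc : c ∈ S) (p : P)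
    {r : ℝ} (hr : 0 ≤ r) : r * infDist p S ≤ infDist (homothety c r p) S := by
  rcases hr.eq_or_lt with rfl | hr
  · simpa using infDist_nonneg
  refine (le_infDist ⟨c, hc⟩).2 fun z hz => ?_
  have hw : homothety c r⁻¹ z ∈ S := by
    rw [homothety_eq_lineMap]
    exact lineMap_mem _ hc hz
  have hzw : homothety c r (homothety c r⁻¹ z) = z := by
    rw [← homothety_mul_apply, mul_inv_cancel₀ hr.ne', homothety_one, AffineMap.id_apply]
  rw [← hzw, dist_homothety_homothety, abs_of_pos hr]
  exact mul_le_mul_of_nonneg_left (infDist_le_dist_of_mem hw) hr.le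

end Homothety

theorem exists_mem_segment_inter_of_subset_union {E : Type*} [AddCommGroup E] [Module ℝ E]
    [TopologicalSpace E] [IsTopologicalAddGroup E] [ContinuousSMul ℝ E] {s t : Set E}
    (hs : IsClosed s) (ht : IsClosed t) {p q : E} (hp : p ∈ s) (hq : q ∈ t)
    (hst : segment ℝ p q ⊆ s ∪ t) : ∃ r ∈ segment ℝ p q, r ∈ s ∩ t :=
  isPreconnected_closed_iff.1 (convex_segment p q).isPreconnected s t hs ht hst
    ⟨p, left_mem_segment ℝ p q, hp⟩ ⟨q, right_mem_segment ℝ p q, hq⟩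

theorem mul_altitudeFrom_le_dist_lineMap {a b c p : EuclideanSpace ℝ (Fin 2)}
    (hp : p ∈ segment ℝ a c) {u : ℝ} (hu : 0 ≤ u) :
    u * altitudeFrom b a c ≤ dist p (lineMap a b u) := by
  have hpac : p ∈ affineSpan ℝ {a, c} := (mem_segment_iff_wbtw.1 hp).mem_affineSpan
  calc u * altitudeFrom b a c
      ≤ infDist (homothety a u b) (affineSpan ℝ {a, c}) :=
        mul_infDist_le_infDist_homothety (mem_affineSpan ℝ (mem_insert a _)) b hu
    _ ≤ dist (homothety a u b) p := infDist_le_dist_of_mem hpac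
    _ = dist p (lineMap a b u) := by rw [dist_comm, homothety_eq_lineMap]

theorem hinge_segment_length_ge_min_altitude_general
    (a b c d : EuclideanSpace ℝ (Fin 2))
    (hglue : convexHull ℝ {a, b, c} ∩ convexHull ℝ {a, b, d} = segment ℝ a b)
    (p q : EuclideanSpace ℝ (Fin 2))
    (hp : p ∈ segment ℝ a c) (hq : q ∈ segment ℝ b d)
    (hE : segment ℝ p q ⊆ convexHull ℝ {a, b, c} ∪ convexHull ℝ {a, b, d}) :
    min (minAltitude a b c) (minAltitude a b d) ≤ dist p q := by
  have hclosed (x y z : EuclideanSpace ℝ (Fin 2)) : IsClosed (convexHull ℝ {x, y, z}) :=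
    ((toFinite _).isCompact_convexHull ℝ).isClosed
  obtain ⟨r, hr, hr_edge⟩ := exists_mem_segment_inter_of_subset_union (hclosed a b c)
    (hclosed a b d) (segment_subset_convexHull (by simp) (by simp) hp)
    (segment_subset_convexHull (by simp) (by simp) hq) hE
  rw [hglue, segment_eq_image_lineMap] at hr_edge
  obtain ⟨u, ⟨hu₀, hu₁⟩, rfl⟩ := hr_edge
  have hpr := mul_altitudeFrom_le_dist_lineMap (b := b) hp hu₀
  have hrq := mul_altitudeFrom_le_dist_lineMap (b := a) hq (sub_nonneg.2 hu₁)
  rw [lineMap_apply_one_sub, dist_comm] at hrq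
  set m := min (minAltitude a b c) (minAltitude a b d)
  have hm_b : m ≤ altitudeFrom b a c :=
    (min_le_left _ _).trans ((min_le_right _ _).trans (min_le_left _ _))
  have hm_a : m ≤ altitudeFrom a b d := (min_le_right _ _).trans (min_le_left _ _)
  calc m = u * m + (1 - u) * m := by ring
    _ ≤ u * altitudeFrom b a c + (1 - u) * altitudeFrom a b d := by gcongr
    _ ≤ dist p (lineMap a b u) + dist (lineMap a b u) q := add_le_add hpr hrq
    _ = dist p q := dist_add_dist_of_mem_segment hr

/-- **hinge lemma.** Let `T₁ = conv{a,b,c}` and `T₂ = conv{a,b,d}` be two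
Euclidean triangles glued along the common edge `[a,b]` so that they form a planar
quadrilateral region (their intersection is exactly the segment `[a,b]`).  Any line segment
`E = [p,q]` contained in the hinge `T₁ ∪ T₂` joining the two non-adjacent edges `[a,c]` and
`[b,d]` has length at least the minimum of the altitudes of `T₁` and `T₂`. -/
theorem hinge_segment_length_ge_min_altitude
    (a b c d : EuclideanSpace ℝ (Fin 2))
    (h₁ : AffineIndependent ℝ ![a, b, c])
    (h₂ : AffineIndependent ℝ ![a, b, d])
    (hglue : convexHull ℝ {a, b, c} ∩ convexHull ℝ {a, b, d} = segment ℝ a b)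
    (p q : EuclideanSpace ℝ (Fin 2))
    (hp : p ∈ segment ℝ a c) (hq : q ∈ segment ℝ b d)
    (hE : segment ℝ p q ⊆ convexHull ℝ {a, b, c} ∪ convexHull ℝ {a, b, d}) :
    min (minAltitude a b c) (minAltitude a b d) ≤ dist p q :=
  hinge_segment_length_ge_min_altitude_general a b c d hglue p q hp hq hE
end
end

section
/- Let (X, d) be a metric space covered by a locally finite family of compact sets (triangles) such that each point has a neighborhood meeting only finitely many triangles, and suppose there exists δ > 0 such that for every x in X, the union U(x) of all triangles meeting a triangle containing x contains the closed ball of radius δ about x. Then (X, d) is a complete metric space. -/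
open Metric Set

/-- Let `(X, d)` be a metric space covered by a locally finite family of
compact sets ("triangles") — each point has a neighborhood meeting only finitely many
triangles — and suppose there is `δ > 0` such that for every `x ∈ X` the union `U(x)` of all
triangles meeting some triangle containing `x` contains the closed ball of radius `δ` about
`x`.  Then `(X, d)` is a complete metric space. -/
theorem complete_of_triangulated_cover
    (X : Type) [MetricSpace X] (ι : Type) (T : ι → Set X)
    (hcompact : ∀ i, IsCompact (T i))
    (hcover : (⋃ i, T i) = Set.univ)
    (hlocfin : ∀ x : X, ∃ U ∈ nhds x, {i : ι | (T i ∩ U).Nonempty}.Finite)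
    (δ : ℝ) (hδ : 0 < δ)
    (hball : ∀ x : X,
      Metric.closedBall x δ ⊆
        ⋃ j ∈ {j : ι | ∃ i, x ∈ T i ∧ (T i ∩ T j).Nonempty}, T j) :
    CompleteSpace X := by
  -- Step 1: each point lies in finitely many triangles, and each triangle meets
  -- finitely many triangles.
  have hmeet : ∀ i, {j : ι | (T i ∩ T j).Nonempty}.Finite := by
    intro i
    -- cover T i by neighborhoods each meeting finitely many triangles
    obtain ⟨s, hcov⟩ := (hcompact i).elim_nhds_subcover'
      (fun y _ => Classical.choose (hlocfin y))
      (fun y _ => (Classical.choose_spec (hlocfin y)).1)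
    have : {j : ι | (T i ∩ T j).Nonempty} ⊆
        ⋃ y ∈ s, {j : ι | (T j ∩ Classical.choose (hlocfin y.1)).Nonempty} := by
      rintro j ⟨z, hzi, hzj⟩
      have := hcov hzi
      simp only [Set.mem_iUnion] at this ⊢
      obtain ⟨y, hy, hzy⟩ := this
      exact ⟨y, hy, z, hzj, hzy⟩
    exact Set.Finite.subset (Set.Finite.biUnion s.finite_toSet
      (fun y _ => (Classical.choose_spec (hlocfin y.1)).2)) this
  have hpt : ∀ x : X, {i : ι | x ∈ T i}.Finite := by
    intro x
    obtain ⟨U, hU, hfin⟩ := hlocfin x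
    exact hfin.subset fun i hi => ⟨x, hi, mem_of_mem_nhds hU⟩
  -- Step 2: closed balls of radius δ are compact.
  have hcb : ∀ x : X, IsCompact (Metric.closedBall x δ) := by
    intro x
    have hSfin : {j : ι | ∃ i, x ∈ T i ∧ (T i ∩ T j).Nonempty}.Finite := by
      have : {j : ι | ∃ i, x ∈ T i ∧ (T i ∩ T j).Nonempty} ⊆
          ⋃ i ∈ {i : ι | x ∈ T i}, {j : ι | (T i ∩ T j).Nonempty} := by
        rintro j ⟨i, hxi, hij⟩
        simp only [Set.mem_iUnion]
        exact ⟨i, hxi, hij⟩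
      exact Set.Finite.subset ((hpt x).biUnion fun i _ => hmeet i) this
    have hK : IsCompact (⋃ j ∈ {j : ι | ∃ i, x ∈ T i ∧ (T i ∩ T j).Nonempty}, T j) :=
      hSfin.isCompact_biUnion fun j _ => hcompact j
    exact hK.of_isClosed_subset Metric.isClosed_closedBall (hball x)
  -- Step 3: completeness via Cauchy sequences.
  apply Metric.complete_of_cauchySeq_tendsto
  intro u hu
  obtain ⟨N, hN⟩ := Metric.cauchySeq_iff'.1 hu δ hδ
  have hmem : ∀ n, u (n + N) ∈ Metric.closedBall (u N) δ := fun n =>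
    Metric.mem_closedBall.2 (le_of_lt (hN (n + N) (Nat.le_add_left N n)))
  obtain ⟨a, _, ha⟩ := cauchySeq_tendsto_of_isComplete ((hcb (u N)).isComplete)
    hmem (hu.comp_tendsto (Filter.tendsto_add_atTop_nat N))
  exact ⟨a, (Filter.tendsto_add_atTop_iff_nat N).1 ha⟩
end

section
/- A complete length space equipped with a bounded metric that admits a locally finite triangulation into finitely many isometry classes of compact triangles is compact; consequently, if a triangulated flat surface with at least one puncture is complete, then its metric is unbounded. -/
open Metric Set Real

noncomputable section

/-- The Euclidean cone of angle `θ`: points `(r, ψ)` with `r ≥ 0`, `ψ ∈ ℝ/θℤ`. -/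
abbrev Cone (θ : ℝ) : Type := {p : ℝ × AddCircle θ // 0 ≤ p.1}

def coneApex (θ : ℝ) : Cone θ := ⟨(0, 0), le_refl 0⟩

/-- The intrinsic distance of the flat metric `dr² + r²dψ²` on the cone of angle `θ`. -/
noncomputable def coneDist (θ : ℝ) (p q : Cone θ) : ℝ :=
  if ‖p.1.2 - q.1.2‖ < π then
    Real.sqrt (p.1.1 ^ 2 + q.1.1 ^ 2 - 2 * p.1.1 * q.1.1 * Real.cos ‖p.1.2 - q.1.2‖)
  else p.1.1 + q.1.1

/-- A cut of a cone (planar wedge) of angle `θ`: points `(r, ψ)`, `r ≥ 0`, `0 ≤ ψ ≤ θ`. -/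
abbrev Wedge (θ : ℝ) : Type := {p : ℝ × ℝ // 0 ≤ p.1 ∧ 0 ≤ p.2 ∧ p.2 ≤ θ}

/-- The intrinsic flat distance on the wedge of angle `θ`. -/
noncomputable def wedgeDist (θ : ℝ) (p q : Wedge θ) : ℝ :=
  if |p.1.2 - q.1.2| < π then
    Real.sqrt (p.1.1 ^ 2 + q.1.1 ^ 2 - 2 * p.1.1 * q.1.1 * Real.cos |p.1.2 - q.1.2|)
  else p.1.1 + q.1.1

/-- `x` is an (interior) cone point of angle `θ`: some metric ball about `x` is isometric to a
ball about the apex of the cone `C_θ`.  Nonsingular flat points are exactly cone points of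
angle `2π`. -/
def IsConePoint {X : Type} [MetricSpace X] (θ : ℝ) (x : X) : Prop :=
  ∃ ε > 0, ∃ f : Metric.ball x ε → Cone θ,
    (∀ p q, coneDist θ (f p) (f q) = dist (p : X) (q : X)) ∧
    Set.range f = {p : Cone θ | p.1.1 < ε}

/-- `x` is a boundary cone point of angle `θ`: some metric ball about `x` is isometric to a
ball about the apex of the wedge of angle `θ`.  Nonsingular boundary points are exactly
wedge points of angle `π`. -/
def IsWedgePoint {X : Type} [MetricSpace X] (θ : ℝ) (x : X) : Prop :=
  0 < θ ∧ ∃ ε > 0, ∃ f : Metric.ball x ε → Wedge θ,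
    (∀ p q, wedgeDist θ (f p) (f q) = dist (p : X) (q : X)) ∧
    Set.range f = {p : Wedge θ | p.1.1 < ε}

/-- The boundary of a flat surface: the set of wedge points. -/
def Bdry (X : Type) [MetricSpace X] : Set X := {z : X | ∃ θ, IsWedgePoint θ z}

/-- Length of the curve `γ` (parametrized on `[0,1]`). -/
noncomputable def curveLen {X : Type} [MetricSpace X] (γ : ℝ → X) : ENNReal :=
  eVariationOn γ (Set.Icc 0 1)

/-- A Euclidean triangulation of a metric space `X` (Definition 2.1 of the paper): a
locally finite cover by compact triangles `T i`, each with a chart which is a homeomorphic,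
distance-nonincreasing-from-the-plane, locally isometric parametrization by a nondegenerate
Euclidean triangle; two triangles meet in nothing, an edge, or a vertex; and there are only
finitely many isometry classes of triangles (finitely many side-length triples). -/
structure EucTriangulation (X : Type) [MetricSpace X] where
  ι : Type
  T : ι → Set X
  vtx : ι → Fin 3 → EuclideanSpace ℝ (Fin 2)
  chart : (i : ι) → (T i) → EuclideanSpace ℝ (Fin 2)
  nondeg : ∀ i, AffineIndependent ℝ (vtx i)
  compactT : ∀ i, IsCompact (T i)
  cover : (⋃ i, T i) = Set.univ
  chart_inj : ∀ i, Function.Injective (chart i)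
  chart_range : ∀ i, Set.range (chart i) = convexHull ℝ (Set.range (vtx i))
  chart_cont : ∀ i, Continuous (chart i)
  chart_short : ∀ i (p q : T i), dist (p : X) (q : X) ≤ dist (chart i p) (chart i q)
  chart_loc_isom : ∀ i (p : T i), ∃ ε > 0, ∀ q : T i,
    dist (chart i p) (chart i q) < ε →
    dist (chart i p) (chart i q) = dist (p : X) (q : X)
  inter : ∀ i j, i ≠ j →
    (T i ∩ T j = ∅) ∨
    (∃ k k' : Fin 3, k ≠ k' ∧
      T i ∩ T j = Subtype.val '' ((chart i) ⁻¹' segment ℝ (vtx i k) (vtx i k'))) ∨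
    (∃ k : Fin 3, T i ∩ T j = Subtype.val '' ((chart i) ⁻¹' {vtx i k}))
  locFin : ∀ K : Set X, IsCompact K → {i : ι | (T i ∩ K).Nonempty}.Finite
  finShapes : Set.Finite {s : ℝ × ℝ × ℝ | ∃ i,
    s = (dist (vtx i 0) (vtx i 1), dist (vtx i 1) (vtx i 2), dist (vtx i 0) (vtx i 2))}


section Aux

variable {X : Type} [MetricSpace X]


variable {X : Type} [MetricSpace X]

/-- Iterated approximate-midpoint lemma: from approximate midpoints, one can find a point
`z` almost on a geodesic from `x` to `y`, close to `y`. -/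
lemma exists_near
    (hlength : ∀ x y : X, ∀ ε > 0, ∃ z : X,
      dist x z ≤ dist x y / 2 + ε ∧ dist z y ≤ dist x y / 2 + ε)
    {δ : ℝ} (hδ : 0 < δ) (x y : X) :
    ∃ z : X, dist x z ≤ max (dist x y - 4*δ) 0 + 2*δ ∧ dist z y ≤ 8*δ := by
  have key : ∀ n : ℕ, ∀ x y : X, dist x y < 8*δ*2^n →
      ∃ z : X, dist x z ≤ max (dist x y - 4*δ) 0 + 2*δ*(1 - (1/2)^n) ∧ dist z y ≤ 8*δ := by
    intro n
    induction n with
    | zero =>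
      intro x y h
      refine ⟨x, ?_, ?_⟩
      · simp [dist_self]
      · simpa using h.le
    | succ n ih =>
      intro x y h
      by_cases hd : dist x y < 8*δ*2^n
      · obtain ⟨z, hz1, hz2⟩ := ih x y hd
        refine ⟨z, hz1.trans ?_, hz2⟩
        have h1 : ((1:ℝ)/2)^(n+1) ≤ (1/2)^n := by
          apply pow_le_pow_of_le_one <;> norm_num
        have h2 := mul_le_mul_of_nonneg_left h1 hδ.le
        linarith
      push_neg at hd
      have h2 : (0:ℝ) < 2^n := by positivity
      have hone : (1:ℝ) ≤ 2^n := one_le_pow₀ (by norm_num)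
      have hdd : 8*δ ≤ dist x y := by nlinarith
      set ε := min (δ * (1/2)^(n+1)) ((8*δ*2^n - dist x y / 2)/2) with hε
      have hεpos : 0 < ε := by
        apply lt_min
        · positivity
        · have : dist x y < 8*δ*2^(n+1) := h
          have : dist x y / 2 < 8*δ*2^n := by
            rw [pow_succ] at this; linarith
          linarith
      obtain ⟨m, hm1, hm2⟩ := hlength x y ε hεpos
      have hmy : dist m y < 8*δ*2^n := by
        have h1 : ε ≤ (8*δ*2^n - dist x y / 2)/2 := min_le_right _ _
        have h2' : dist x y / 2 < 8*δ*2^n := by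
          rw [pow_succ] at h; linarith
        linarith
      obtain ⟨z, hz1, hz2⟩ := ih m y hmy
      refine ⟨z, ?_, hz2⟩
      have hεsmall : ε ≤ δ * (1/2)^(n+1) := min_le_left _ _
      have hmax1 : max (dist m y - 4*δ) 0 ≤ max (dist x y / 2 + ε - 4*δ) 0 :=
        max_le_max (by linarith) le_rfl
      have hpos1 : (0:ℝ) ≤ dist x y / 2 + ε - 4*δ := by linarith
      have hmax1' : max (dist x y / 2 + ε - 4*δ) 0 = dist x y / 2 + ε - 4*δ :=
        max_eq_left hpos1
      have hmax2 : max (dist x y - 4*δ) 0 = dist x y - 4*δ :=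
        max_eq_left (by linarith)
      have htriangle : dist x z ≤ dist x m + dist m z := dist_triangle _ _ _
      have hp : ((1:ℝ)/2)^(n+1) = (1/2)^n * (1/2) := pow_succ _ _
      calc dist x z ≤ (dist x y / 2 + ε) + (max (dist m y - 4*δ) 0 + 2*δ*(1 - (1/2)^n)) := by
            linarith
        _ ≤ (dist x y / 2 + ε) + ((dist x y / 2 + ε - 4*δ) + 2*δ*(1 - (1/2)^n)) := by
            have := hmax1.trans_eq hmax1'
            linarith
        _ ≤ max (dist x y - 4*δ) 0 + 2*δ*(1 - (1/2)^(n+1)) := by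
            rw [hmax2, hp]
            nlinarith [pow_pos (show (0:ℝ) < 1/2 by norm_num) n]
  obtain ⟨n, hn⟩ := pow_unbounded_of_one_lt (y := (2:ℝ)) (dist x y / (8*δ)) (by norm_num)
  have hxy : dist x y < 8*δ*2^n := by
    rw [div_lt_iff₀ (by positivity)] at hn
    linarith
  obtain ⟨z, hz1, hz2⟩ := key n x y hxy
  refine ⟨z, hz1.trans ?_, hz2⟩
  have : (0:ℝ) < (1/2)^n := by positivity
  nlinarith

end Aux

section LC

lemma EucTriangulation.loc_compact {X : Type} [MetricSpace X] (tri : EucTriangulation X)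
    (x : X) : ∃ ρ > 0, IsCompact (Metric.closedBall x ρ) := by
  classical
  set I : Set tri.ι := {i | x ∈ tri.T i} with hIdef
  have hIfin : I.Finite := (tri.locFin {x} isCompact_singleton).subset
    (fun i hi => ⟨x, hi, rfl⟩)
  set U : Set X := ⋃ i ∈ I, tri.T i with hU
  have hUc : IsCompact U := hIfin.isCompact_biUnion (fun i _ => tri.compactT i)
  suffices h : ∃ ρ > 0, Metric.ball x ρ ⊆ U by
    obtain ⟨ρ, hρ, hsub⟩ := h
    exact ⟨ρ/2, by linarith, hUc.of_isClosed_subset Metric.isClosed_closedBall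
      ((Metric.closedBall_subset_ball (by linarith)).trans hsub)⟩
  by_contra hcon
  push_neg at hcon
  have hy : ∀ n : ℕ, ∃ z, z ∈ Metric.ball x (1/(n+1)) ∧ z ∉ U := by
    intro n
    have h2 := hcon (1/(n+1)) (by positivity)
    rw [Set.not_subset] at h2
    obtain ⟨z, h1, h2⟩ := h2; exact ⟨z, h1, h2⟩
  choose y hy1 hy2 using hy
  have hlim : Filter.Tendsto y Filter.atTop (nhds x) := by
    rw [tendsto_iff_dist_tendsto_zero]
    apply squeeze_zero (fun n => dist_nonneg) (fun n => (Metric.mem_ball.mp (hy1 n)).le)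
    exact tendsto_one_div_add_atTop_nhds_zero_nat
  set K' : Set X := insert x (Set.range y) with hK'def
  have hK' : IsCompact K' := hlim.isCompact_insert_range
  set J : Set tri.ι := {i | (tri.T i ∩ K').Nonempty} with hJdef
  have hJ : J.Finite := tri.locFin _ hK'
  have hg : ∀ n : ℕ, ∃ i, i ∈ J ∧ y n ∈ tri.T i := by
    intro n
    have hn : y n ∈ ⋃ i, tri.T i := by rw [tri.cover]; trivial
    obtain ⟨i, hi⟩ := Set.mem_iUnion.mp hn
    exact ⟨i, ⟨y n, hi, Or.inr ⟨n, rfl⟩⟩, hi⟩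
  choose g hg1 hg2 using hg
  haveI : Finite ↥J := hJ.to_subtype
  obtain ⟨j, hjinf⟩ := Finite.exists_infinite_fiber (fun n : ℕ => (⟨g n, hg1 n⟩ : J))
  have hfib : {n : ℕ | g n = (j : tri.ι)}.Infinite := by
    have h1 : ((fun n : ℕ => (⟨g n, hg1 n⟩ : J)) ⁻¹' {j}).Infinite :=
      Set.infinite_coe_iff.mp hjinf
    apply h1.mono
    intro n hn
    simpa [Subtype.ext_iff] using hn
  have hxj : x ∈ tri.T (j : tri.ι) := by
    have hcl : IsClosed (tri.T (j : tri.ι)) := (tri.compactT _).isClosed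
    rw [← hcl.closure_eq]
    rw [Metric.mem_closure_iff]
    intro ε hε
    obtain ⟨N, hN⟩ := exists_nat_one_div_lt hε
    obtain ⟨n, hn, hnN⟩ := hfib.exists_gt N
    refine ⟨y n, by rw [← hn]; exact hg2 n, ?_⟩
    have h1 : dist x (y n) < 1/(n+1) := by
      rw [dist_comm]; exact Metric.mem_ball.mp (hy1 n)
    have h2 : (1:ℝ)/(n+1) ≤ 1/(N+1) := by
      apply one_div_le_one_div_of_le (by positivity)
      have : (N:ℝ) ≤ n := by exact_mod_cast hnN.le
      linarith
    calc dist x (y n) < 1/(n+1) := h1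
      _ ≤ 1/(N+1) := h2
      _ < ε := hN
  obtain ⟨n, hn, -⟩ := hfib.exists_gt 0
  exact hy2 n (Set.mem_biUnion (show (j : tri.ι) ∈ I from hxj) (by rw [← hn] at hxj ⊢; exact hg2 n))

/-- The Hopf–Rinow style engine: a complete, locally compact space with approximate
midpoints whose metric is bounded is compact. -/
lemma engine {X : Type} [MetricSpace X] [CompleteSpace X]
    (hlength : ∀ x y : X, ∀ ε > 0, ∃ z : X,
      dist x z ≤ dist x y / 2 + ε ∧ dist z y ≤ dist x y / 2 + ε)
    (hloc : ∀ x : X, ∃ ρ > 0, IsCompact (Metric.closedBall x ρ))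
    (x₀ : X) (M : ℝ) (hM : (Set.univ : Set X) ⊆ Metric.closedBall x₀ M) :
    IsCompact (Set.univ : Set X) := by
  classical
  obtain ⟨r₀, hr₀, hr₀c⟩ := hloc x₀
  set M' : ℝ := max M r₀ with hM'def
  have hM' : (Set.univ : Set X) ⊆ Metric.closedBall x₀ M' :=
    hM.trans (Metric.closedBall_subset_closedBall (le_max_left _ _))
  set S : Set ℝ := {r | r ≤ M' ∧ IsCompact (Metric.closedBall x₀ r)} with hSdef
  have hr₀S : r₀ ∈ S := ⟨le_max_right _ _, hr₀c⟩
  have hSne : S.Nonempty := ⟨r₀, hr₀S⟩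
  have hbdd : BddAbove S := ⟨M', fun r hr => hr.1⟩
  set R : ℝ := sSup S with hRdef
  have hR1 : r₀ ≤ R := le_csSup hbdd hr₀S
  have hR2 : R ≤ M' := csSup_le hSne (fun r hr => hr.1)
  -- the closed ball of radius R is compact
  have hRc : IsCompact (Metric.closedBall x₀ R) := by
    apply TotallyBounded.isCompact_of_isClosed _ Metric.isClosed_closedBall
    rw [Metric.totallyBounded_iff]
    intro ε hε
    set δ : ℝ := min (ε/9) (r₀/8) with hδdef
    have hδ : 0 < δ := lt_min (by linarith) (by linarith)
    have hδ1 : δ ≤ ε/9 := min_le_left _ _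
    have hδ2 : δ ≤ r₀/8 := min_le_right _ _
    obtain ⟨r, hrS, hrR⟩ := exists_lt_of_lt_csSup hSne (show R - δ < R by linarith)
    have := hrS.2.totallyBounded
    rw [Metric.totallyBounded_iff] at this
    obtain ⟨N, hNfin, hNsub⟩ := this δ hδ
    refine ⟨N, hNfin, ?_⟩
    intro p hp
    have hpd : dist x₀ p ≤ R := by rw [dist_comm]; exact Metric.mem_closedBall.mp hp
    obtain ⟨z, hz1, hz2⟩ := exists_near hlength hδ x₀ p
    have hzr : dist x₀ z ≤ r := by
      have h1 : max (dist x₀ p - 4*δ) 0 ≤ max (R - 4*δ) 0 := max_le_max (by linarith) le_rfl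
      have h2 : max (R - 4*δ) 0 = R - 4*δ := max_eq_left (by linarith)
      linarith [hz1, h1.trans_eq h2]
    have hzmem : z ∈ Metric.closedBall x₀ r := by
      rw [Metric.mem_closedBall, dist_comm]; exact hzr
    obtain ⟨w, hwN, hwz⟩ := Set.mem_iUnion₂.mp (hNsub hzmem)
    refine Set.mem_iUnion₂.mpr ⟨w, hwN, ?_⟩
    rw [Metric.mem_ball]
    have h3 : dist z w < δ := Metric.mem_ball.mp hwz
    calc dist p w ≤ dist p z + dist z w := dist_triangle _ _ _
      _ < 8*δ + δ := by rw [dist_comm p z]; linarith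
      _ ≤ ε := by linarith
  -- expansion: a slightly larger ball is also compact
  choose ρ hρpos hρc using hloc
  obtain ⟨t, htmem, htcov⟩ := hRc.elim_nhds_subcover (fun z => Metric.ball z (ρ z / 2))
    (fun z _ => Metric.ball_mem_nhds z (by have := hρpos z; linarith))
  have hx₀R : x₀ ∈ Metric.closedBall x₀ R := by
    rw [Metric.mem_closedBall, dist_self]; linarith
  have htne : t.Nonempty := by
    obtain ⟨w, hw, -⟩ := Set.mem_iUnion₂.mp (htcov hx₀R)
    exact ⟨w, hw⟩
  set δ : ℝ := min (r₀/8) ((t.inf' htne ρ)/16) with hδdef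
  have hinfpos : 0 < t.inf' htne ρ := by
    rw [Finset.lt_inf'_iff]
    exact fun w _ => hρpos w
  have hδ : 0 < δ := lt_min (by linarith) (by linarith)
  have hδ2 : δ ≤ r₀/8 := min_le_left _ _
  have hbig : IsCompact (⋃ w ∈ t, Metric.closedBall w (ρ w)) :=
    t.isCompact_biUnion (fun w _ => hρc w)
  have hsub : Metric.closedBall x₀ (R + δ) ⊆ ⋃ w ∈ t, Metric.closedBall w (ρ w) := by
    intro p hp
    have hpd : dist x₀ p ≤ R + δ := by rw [dist_comm]; exact Metric.mem_closedBall.mp hp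
    obtain ⟨z, hz1, hz2⟩ := exists_near hlength hδ x₀ p
    have hzR : dist x₀ z ≤ R := by
      have h1 : max (dist x₀ p - 4*δ) 0 ≤ max (R - 3*δ) 0 := max_le_max (by linarith) le_rfl
      have h2 : max (R - 3*δ) 0 = R - 3*δ := max_eq_left (by linarith)
      linarith [hz1, h1.trans_eq h2]
    have hzmem : z ∈ Metric.closedBall x₀ R := by
      rw [Metric.mem_closedBall, dist_comm]; exact hzR
    obtain ⟨w, hwt, hwz⟩ := Set.mem_iUnion₂.mp (htcov hzmem)
    refine Set.mem_iUnion₂.mpr ⟨w, hwt, ?_⟩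
    rw [Metric.mem_closedBall]
    have h3 : dist z w < ρ w / 2 := Metric.mem_ball.mp hwz
    have h4 : t.inf' htne ρ ≤ ρ w := Finset.inf'_le _ hwt
    have h5 : δ ≤ ρ w / 16 := le_trans (min_le_right _ _) (by linarith)
    calc dist p w ≤ dist p z + dist z w := dist_triangle _ _ _
      _ ≤ 8*δ + ρ w / 2 := by rw [dist_comm p z]; linarith
      _ ≤ ρ w := by linarith
  have hRδc : IsCompact (Metric.closedBall x₀ (R + δ)) :=
    hbig.of_isClosed_subset Metric.isClosed_closedBall hsub
  -- hence R = M'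
  have hRM : M' ≤ R := by
    by_contra hlt
    push_neg at hlt
    have hmem : min (R + δ) M' ∈ S := by
      refine ⟨min_le_right _ _, ?_⟩
      exact hRδc.of_isClosed_subset Metric.isClosed_closedBall
        (Metric.closedBall_subset_closedBall (min_le_left _ _))
    have := le_csSup hbdd hmem
    have hgt : R < min (R + δ) M' := lt_min (by linarith) hlt
    linarith
  exact hRc.of_isClosed_subset isClosed_univ
    (hM'.trans (Metric.closedBall_subset_closedBall hRM))

end LC

/-- A complete length space (length-space property expressed via
approximate midpoints) with a bounded metric that admits a locally finite Euclidean
triangulation into finitely many isometry classes of compact triangles is compact.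
Consequently, a complete triangulated flat surface which is non-compact (e.g. has at least
one puncture) has an unbounded metric. -/
theorem compact_of_bounded_complete_triangulated
    (X : Type) [MetricSpace X] [CompleteSpace X]
    (hlength : ∀ x y : X, ∀ ε > 0, ∃ z : X,
      dist x z ≤ dist x y / 2 + ε ∧ dist z y ≤ dist x y / 2 + ε)
    (htri : Nonempty (EucTriangulation X)) :
    (Bornology.IsBounded (Set.univ : Set X) → CompactSpace X) ∧
    (¬ CompactSpace X → ¬ Bornology.IsBounded (Set.univ : Set X)) := by
  have main : Bornology.IsBounded (Set.univ : Set X) → CompactSpace X := by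
    intro hb
    rcases isEmpty_or_nonempty X with hX | hX
    · exact Finite.compactSpace
    obtain ⟨x₀⟩ := hX
    obtain ⟨M, hM⟩ := hb.subset_closedBall x₀
    obtain ⟨tri⟩ := htri
    rw [← isCompact_univ_iff]
    exact engine hlength (tri.loc_compact) x₀ M hM
  exact ⟨main, fun hnc hb => hnc (main hb)⟩
end
end
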